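/- arXiv:2205.03437 — 3 statements merged into one kernel-verified Lean document; each statement's English description precedes it below -/
import Mathlib

section
/- There is a constant C > 0 such that for every real R ≥ 1, every finite set B ⊂ ℝ³ in convex position whose pairwise Euclidean distances are all at least 1 and which is contained in a closed ball of radius R satisfies |B| ≤ C·R². -/
def ConvexPos {d : ℕ} (B : Set (EuclideanSpace ℝ (Fin d))) : Prop :=
  ∀ x ∈ B, x ∉ convexHull ℝ (B \ {x})

/-!
Every point `b` of a set in convex position is strictly separated from the other points by a
hyperplane, so it has an outward normal `v` with `⟪v, a - b⟫ ≤ 0` for all `a ∈ B`. Pushing each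
`b` along its normal onto the bounding sphere of radius `R` does not decrease distances: the
cross term in `‖u a - u b‖²` is nonnegative. The pushed points are thus `1`-separated on the
sphere, so the disjoint balls of radius `1/2` around them fit into the shell between radii
`R - 1/2` and `R + 1/2`; comparing volumes gives `|B| / 8 ≤ (R + 1/2)³ - (R - 1/2)³ = 3R² + 1/4`,
hence `|B| ≤ 24R² + 2 ≤ 26R²`.
-/

open Metric MeasureTheory Module Set Finset
open scoped RealInnerProductSpace

section InnerProduct

variable {E : Type*} [NormedAddCommGroup E] [InnerProductSpace ℝ E]

theorem dist_le_dist_of_inner_sub_nonpos {a b u v : E} (hu : ⟪u - a, b - a⟫ ≤ 0)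
    (hv : ⟪v - b, a - b⟫ ≤ 0) : dist a b ≤ dist u v := by
  have hcross : 0 ≤ ⟪a - b, (u - a) - (v - b)⟫ := by
    have h₁ : ⟪a - b, u - a⟫ = -⟪u - a, b - a⟫ := by
      rw [real_inner_comm, ← inner_neg_right, neg_sub]
    rw [inner_sub_right, h₁, real_inner_comm (v - b) (a - b)]
    linarith
  have hsq : ‖a - b‖ ^ 2 ≤ ‖u - v‖ ^ 2 := by
    have : u - v = (a - b) + ((u - a) - (v - b)) := by abel
    rw [this, norm_add_sq_real]
    nlinarith [sq_nonneg ‖(u - a) - (v - b)‖]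
  rw [dist_eq_norm, dist_eq_norm]
  exact (pow_le_pow_iff_left₀ (norm_nonneg _) (norm_nonneg _) two_ne_zero).1 hsq

theorem exists_inner_sub_neg_of_notMem [CompleteSpace E] {t : Set E} {b : E}
    (ht : Convex ℝ t) (ht' : IsClosed t) (hb : b ∉ t) :
    ∃ v : E, ∀ a ∈ t, ⟪v, a - b⟫ < 0 := by
  obtain ⟨f, s, hf, hs⟩ := geometric_hahn_banach_closed_point ht ht' hb
  refine ⟨(InnerProductSpace.toDual ℝ E).symm f, fun a ha => ?_⟩
  rw [inner_sub_right, InnerProductSpace.toDual_symm_apply, InnerProductSpace.toDual_symm_apply]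
  linarith [hf a ha]

end InnerProduct

theorem exists_nonneg_dist_add_smul_eq {E : Type*} [NormedAddCommGroup E] [NormedSpace ℝ E]
    {b c v : E} {R : ℝ} (hb : dist b c ≤ R) (hv : v ≠ 0) :
    ∃ t : ℝ, 0 ≤ t ∧ dist (b + t • v) c = R := by
  set T := (R + dist b c) / ‖v‖
  have hT : 0 ≤ T := div_nonneg (by linarith [dist_nonneg (x := b) (y := c)]) (norm_nonneg v)
  have hRT : R ≤ dist (b + T • v) c := by
    have hTv : ‖T • v‖ = R + dist b c := by
      rw [norm_smul, Real.norm_of_nonneg hT, div_mul_cancel₀ _ (norm_ne_zero_iff.2 hv)]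
    calc R = ‖T • v‖ - dist b c := by rw [hTv]; ring
      _ = ‖(b - c + T • v) - (b - c)‖ - ‖b - c‖ := by rw [dist_eq_norm, add_sub_cancel_left]
      _ ≤ ‖b - c + T • v‖ := by linarith [norm_sub_le (b - c + T • v) (b - c)]
      _ = dist (b + T • v) c := by rw [dist_eq_norm, add_sub_right_comm]
  obtain ⟨t, ht, hdist⟩ := intermediate_value_Icc hT
    (by fun_prop : ContinuousOn (fun t : ℝ => dist (b + t • v) c) (Icc 0 T))
    (show R ∈ Icc (dist (b + (0 : ℝ) • v) c) (dist (b + T • v) c) by simpa using ⟨hb, hRT⟩)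
  exact ⟨t, ht.1, hdist⟩

theorem MeasureTheory.Measure.addHaar_real_ball {E : Type*} [NormedAddCommGroup E]
    [NormedSpace ℝ E] [MeasurableSpace E] [BorelSpace E] [FiniteDimensional ℝ E] [Nontrivial E]
    (μ : Measure E) [μ.IsAddHaarMeasure] (x : E) {r : ℝ} (hr : 0 ≤ r) :
    μ.real (ball x r) = r ^ finrank ℝ E * μ.real (ball 0 1) := by
  rw [measureReal_def, measureReal_def, μ.addHaar_ball x hr, ENNReal.toReal_mul,
    ENNReal.toReal_ofReal (by positivity)]

theorem card_mul_pow_add_pow_le_of_subset_sphere {E : Type*} [NormedAddCommGroup E]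
    [NormedSpace ℝ E] [FiniteDimensional ℝ E] [Nontrivial E] {s : Finset E} {c : E} {R : ℝ}
    (hR : 1 / 2 ≤ R) (hs : (s : Set E) ⊆ sphere c R)
    (hsep : (s : Set E).Pairwise fun x y => 1 ≤ dist x y) :
    #s * (1 / 2) ^ finrank ℝ E + (R - 1 / 2) ^ finrank ℝ E ≤ (R + 1 / 2) ^ finrank ℝ E := by
  borelize E
  set μ := (finBasis ℝ E).addHaar
  have hdisj : (s : Set E).PairwiseDisjoint (ball · (1 / 2)) := fun x hx y hy hxy =>
    ball_disjoint_ball (by linarith [hsep hx hy hxy])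
  have hannulus : ∀ x ∈ s, ball x (1 / 2) ⊆ closedBall c (R + 1 / 2) \ ball c (R - 1 / 2) := by
    intro x hx z hz
    have hxc : dist x c = R := hs hx
    rw [mem_ball] at hz
    constructor
    · rw [mem_closedBall]; linarith [dist_triangle z x c]
    · rw [mem_ball, not_lt]; linarith [dist_triangle x z c, dist_comm x z]
  have hsub : (⋃ x ∈ s, ball x (1 / 2)) ∪ ball c (R - 1 / 2) ⊆ closedBall c (R + 1 / 2) :=
    union_subset (iUnion₂_subset fun x hx => (hannulus x hx).trans sdiff_subset)
      (ball_subset_closedBall.trans (closedBall_subset_closedBall (by linarith)))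
  have hdisj' : Disjoint (⋃ x ∈ s, ball x (1 / 2)) (ball c (R - 1 / 2)) :=
    disjoint_iUnion₂_left.2 fun x hx => disjoint_sdiff_left.mono_left (hannulus x hx)
  have hfin : μ (closedBall c (R + 1 / 2)) ≠ ⊤ := measure_closedBall_lt_top.ne
  have hvol := measureReal_mono (μ := μ) hsub hfin
  rw [measureReal_union hdisj' measurableSet_ball (measure_ne_top_of_subset
      (subset_union_left.trans hsub) hfin),
    measureReal_biUnion_finset hdisj fun _ _ => measurableSet_ball,
    μ.addHaar_real_closedBall_eq_addHaar_real_ball] at hvol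
  simp only [μ.addHaar_real_ball _ (by norm_num : (0 : ℝ) ≤ 1 / 2),
    μ.addHaar_real_ball _ (by linarith : 0 ≤ R - 1 / 2),
    μ.addHaar_real_ball _ (by linarith : 0 ≤ R + 1 / 2), Finset.sum_const, nsmul_eq_mul] at hvol
  have hunit : 0 < μ.real (ball 0 1) :=
    ENNReal.toReal_pos (measure_ball_pos μ 0 one_pos).ne' measure_ball_lt_top.ne
  nlinarith

theorem ConvexPos.exists_mem_sphere_inner_sub_nonpos {d : ℕ}
    {B : Finset (EuclideanSpace ℝ (Fin d))} {c b a₀ : EuclideanSpace ℝ (Fin d)} {R : ℝ}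
    (hB : ConvexPos (B : Set (EuclideanSpace ℝ (Fin d))))
    (hBR : (B : Set (EuclideanSpace ℝ (Fin d))) ⊆ closedBall c R) (hb : b ∈ B) (ha₀ : a₀ ∈ B)
    (hne : a₀ ≠ b) :
    ∃ u ∈ sphere c R, ∀ a ∈ B, ⟪u - b, a - b⟫ ≤ 0 := by
  have hmem : ∀ a ∈ B, a ≠ b → a ∈ convexHull ℝ ((B : Set (EuclideanSpace ℝ (Fin d))) \ {b}) :=
    fun a ha hab => subset_convexHull ℝ _ ⟨ha, hab⟩
  obtain ⟨v, hv⟩ := exists_inner_sub_neg_of_notMem (convex_convexHull ℝ _)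
    (B.finite_toSet.sdiff.isClosed_convexHull (𝕜 := ℝ)) (hB b hb)
  have hv0 : v ≠ 0 := by
    rintro rfl
    simpa using hv a₀ (hmem a₀ ha₀ hne)
  obtain ⟨t, ht, hdist⟩ := exists_nonneg_dist_add_smul_eq (hBR hb) hv0
  refine ⟨b + t • v, hdist, fun a ha => ?_⟩
  rw [add_sub_cancel_left, real_inner_smul_left]
  obtain rfl | hab := eq_or_ne a b
  · simp
  · exact mul_nonpos_of_nonneg_of_nonpos ht (hv a (hmem a ha hab)).le

theorem convex_position_in_ball_card_le :
    ∃ C : ℝ, 0 < C ∧ ∀ R : ℝ, 1 ≤ R →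
      ∀ B : Finset (EuclideanSpace ℝ (Fin 3)),
        ConvexPos (B : Set (EuclideanSpace ℝ (Fin 3))) →
        (∀ a ∈ B, ∀ b ∈ B, a ≠ b → 1 ≤ dist a b) →
        (∃ c : EuclideanSpace ℝ (Fin 3),
          (B : Set (EuclideanSpace ℝ (Fin 3))) ⊆ Metric.closedBall c R) →
        (B.card : ℝ) ≤ C * R ^ 2 := by
  refine ⟨26, by norm_num, fun R hR B hB hsep ⟨c, hBR⟩ => ?_⟩
  rcases le_or_gt #B 1 with hcard | hcard
  · have : (#B : ℝ) ≤ 1 := mod_cast hcard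
    nlinarith
  have hnormal : ∀ b ∈ B, ∃ u ∈ sphere c R, ∀ a ∈ B, ⟪u - b, a - b⟫ ≤ 0 := fun b hb =>
    let ⟨_, ha, hab⟩ := exists_mem_ne hcard b
    hB.exists_mem_sphere_inner_sub_nonpos hBR hb ha hab
  choose! u hu_sphere hu_normal using hnormal
  have hsep' : (B : Set (EuclideanSpace ℝ (Fin 3))).Pairwise fun a b => 1 ≤ dist (u a) (u b) :=
    fun a ha b hb hab => (hsep a ha b hb hab).trans
      (dist_le_dist_of_inner_sub_nonpos (hu_normal a ha b hb) (hu_normal b hb a ha))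
  have hinj : InjOn u B := fun a ha b hb h => by
    by_contra hab
    have : 1 ≤ dist (u a) (u b) := hsep' ha hb hab
    rw [h, dist_self] at this
    linarith
  have hpack := card_mul_pow_add_pow_le_of_subset_sphere (s := B.image u) (R := R)
    (by linarith) (by simpa [Set.subset_def] using hu_sphere)
    (by rwa [coe_image, hinj.pairwise_image])
  rw [card_image_of_injOn hinj, finrank_euclideanSpace_fin] at hpack
  nlinarith
end

section
/- For every integer d ≥ 2 there is a constant C_d > 0 such that for every real R ≥ 1, every finite set B ⊂ ℝ^d in convex position whose pairwise Euclidean distances are all at least 1 and which is contained in a closed ball of radius R satisfies |B| ≤ C_d·R^{d−1}. -/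
/-!
Every point `v` of a finite set in convex position has an outward unit normal `n v`, i.e.
`⟪n v, w - v⟫ ≤ 0` for all other points `w`. Pushing each point along its normal onto the
bounding sphere of radius `R` does not decrease pairwise distances, so the pushed points are still
`1`-separated. The disjoint balls of radius `1/2` around them fill part of the shell between radii
`R - 1/2` and `R + 1/2`, whose volume is `O(R ^ (d - 1))`.
-/

open Metric MeasureTheory Finset Module RealInnerProductSpace

section InnerProductSpace

variable {E : Type*} [NormedAddCommGroup E] [InnerProductSpace ℝ E]

theorem exists_unit_inner_sub_nonpos_of_notMem_convexHull [CompleteSpace E] [Nontrivial E]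
    {s : Set E} (hs : s.Finite) {x : E} (hx : x ∉ convexHull ℝ s) :
    ∃ n : E, ‖n‖ = 1 ∧ ∀ w ∈ s, ⟪n, w - x⟫ ≤ 0 := by
  rcases s.eq_empty_or_nonempty with rfl | ⟨w₀, hw₀⟩
  · obtain ⟨n, hn⟩ := exists_norm_eq E zero_le_one
    exact ⟨n, hn, by simp⟩
  obtain ⟨f, u, hf, hu⟩ := geometric_hahn_banach_closed_point (convex_convexHull ℝ s)
    (hs.isCompact_convexHull (𝕜 := ℝ)).isClosed hx
  set y := (InnerProductSpace.toDual ℝ E).symm f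
  have hy : ∀ z, ⟪y, z⟫ = f z := fun z => InnerProductSpace.toDual_symm_apply
  have hlt : ∀ w ∈ s, ⟪y, w - x⟫ < 0 := fun w hw => by
    rw [hy, map_sub]; linarith [hf w (subset_convexHull ℝ s hw)]
  have hy₀ : y ≠ 0 := by
    intro h
    simpa [h] using hlt w₀ hw₀
  refine ⟨‖y‖⁻¹ • y, by simp [norm_smul, hy₀], fun w hw => ?_⟩
  rw [real_inner_smul_left]
  exact mul_nonpos_of_nonneg_of_nonpos (by positivity) (hlt w hw).le

theorem dist_le_dist_add_smul_add_smul {v w n m : E} {s t : ℝ} (hs : 0 ≤ s) (ht : 0 ≤ t)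
    (hn : ⟪n, w - v⟫ ≤ 0) (hm : ⟪m, v - w⟫ ≤ 0) :
    dist v w ≤ dist (v + s • n) (w + t • m) := by
  have hcross : 0 ≤ ⟪v - w, s • n - t • m⟫ := by
    have hvn : ⟪v - w, n⟫ = -⟪n, w - v⟫ := by rw [real_inner_comm, ← neg_sub, inner_neg_right]
    rw [inner_sub_right, real_inner_smul_right, real_inner_smul_right, hvn, real_inner_comm m]
    nlinarith [mul_nonneg hs (neg_nonneg.mpr hn), mul_nonneg ht (neg_nonneg.mpr hm)]
  have hsq : ‖v - w‖ ^ 2 ≤ ‖(v - w) + (s • n - t • m)‖ ^ 2 := by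
    rw [norm_add_sq_real]
    nlinarith [sq_nonneg ‖s • n - t • m‖]
  rw [dist_eq_norm, dist_eq_norm, show v + s • n - (w + t • m) = (v - w) + (s • n - t • m) by abel]
  exact (pow_le_pow_iff_left₀ (norm_nonneg _) (norm_nonneg _) two_ne_zero).mp hsq

end InnerProductSpace

theorem exists_nonneg_add_smul_mem_sphere {E : Type*} [NormedAddCommGroup E] [NormedSpace ℝ E]
    {c v n : E} {ρ : ℝ} (hv : v ∈ closedBall c ρ) (hn : ‖n‖ = 1) :
    ∃ t : ℝ, 0 ≤ t ∧ v + t • n ∈ sphere c ρ := by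
  have hρ : 0 ≤ ρ := dist_nonneg.trans hv
  have hcont : Continuous fun t : ℝ => dist (v + t • n) c := by fun_prop
  have hfar : ρ ≤ dist (v + (2 * ρ) • n) c := by
    have := dist_triangle_left (v + (2 * ρ) • n) v c
    rw [dist_self_add_left, norm_smul, hn, Real.norm_of_nonneg (by positivity)] at this
    linarith [mem_closedBall.mp hv, dist_comm c v, dist_comm c (v + (2 * ρ) • n)]
  obtain ⟨t, ht, hρt⟩ := intermediate_value_Icc (by positivity) hcont.continuousOn
    ⟨by simpa using hv, hfar⟩
  exact ⟨t, ht.1, hρt⟩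

namespace MeasureTheory.Measure

theorem addHaar_real_ball_s4 {E : Type*} [NormedAddCommGroup E] [NormedSpace ℝ E] [MeasurableSpace E]
    [BorelSpace E] [FiniteDimensional ℝ E] [Nontrivial E] (μ : Measure E) [IsAddHaarMeasure μ]
    (x : E) {r : ℝ} (hr : 0 ≤ r) :
    μ.real (ball x r) = r ^ finrank ℝ E * μ.real (ball 0 1) := by
  simp [measureReal_def, addHaar_ball μ x hr, ENNReal.toReal_ofReal (by positivity : 0 ≤ r ^ _)]

end MeasureTheory.Measure

theorem card_mul_pow_le_of_separated_on_sphere {E : Type*} [NormedAddCommGroup E]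
    [NormedSpace ℝ E] [FiniteDimensional ℝ E] [Nontrivial E] {ι : Type*} (s : Finset ι)
    (f : ι → E) {c : E} {ρ r : ℝ} (hr : 0 < r) (hrρ : r ≤ ρ) (hf : ∀ i ∈ s, f i ∈ sphere c ρ)
    (hsep : (s : Set ι).Pairwise fun i j => 2 * r ≤ dist (f i) (f j)) :
    #s * r ^ finrank ℝ E ≤ (ρ + r) ^ finrank ℝ E - (ρ - r) ^ finrank ℝ E := by
  borelize E
  set μ : Measure E := Measure.addHaar
  set U := ⋃ i ∈ s, ball (f i) r
  have hU : μ.real U = #s * (r ^ finrank ℝ E * μ.real (ball 0 1)) := by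
    rw [measureReal_biUnion_finset (fun i hi j hj hij => ball_disjoint_ball (by
      linarith [hsep hi hj hij])) fun _ _ => measurableSet_ball]
    simp [Measure.addHaar_real_ball_s4 μ _ hr.le]
  have hdisj : Disjoint (ball c (ρ - r)) U := by
    simp only [U, Set.disjoint_iUnion_right]
    intro i hi
    exact ball_disjoint_ball (by rw [dist_comm, mem_sphere.mp (hf i hi)]; linarith)
  have hsub : ball c (ρ - r) ∪ U ⊆ ball c (ρ + r) := by
    refine Set.union_subset (ball_subset_ball (by linarith)) (Set.iUnion₂_subset fun i hi => ?_)
    exact ball_subset_ball' (by rw [mem_sphere.mp (hf i hi), add_comm])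
  have hvol : μ.real (ball c (ρ - r)) + μ.real U ≤ μ.real (ball c (ρ + r)) := by
    rw [← measureReal_union hdisj (s.measurableSet_biUnion fun _ _ => measurableSet_ball)
      (h₂ := ((measure_mono (Set.subset_union_right.trans hsub)).trans_lt measure_ball_lt_top).ne)]
    exact measureReal_mono hsub
  have hκ : 0 < μ.real (ball (0 : E) 1) :=
    ENNReal.toReal_pos (measure_ball_pos μ 0 one_pos).ne' measure_ball_lt_top.ne
  rw [hU, Measure.addHaar_real_ball_s4 μ c (by linarith), Measure.addHaar_real_ball_s4 μ c (by linarith)]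
    at hvol
  nlinarith

theorem card_mul_pow_le_of_convexPosition {E : Type*} [NormedAddCommGroup E]
    [InnerProductSpace ℝ E] [FiniteDimensional ℝ E] [Nontrivial E] {B : Finset E} {c : E}
    {R r : ℝ} (hr : 0 < r) (hrR : r ≤ R) (hB : ∀ x ∈ B, x ∉ convexHull ℝ ((B : Set E) \ {x}))
    (hsep : (B : Set E).Pairwise fun a b => 2 * r ≤ dist a b) (hBc : (B : Set E) ⊆ closedBall c R) :
    #B * r ^ finrank ℝ E ≤ (R + r) ^ finrank ℝ E - (R - r) ^ finrank ℝ E := by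
  choose! n hn hnB using fun v (hv : v ∈ B) =>
    exists_unit_inner_sub_nonpos_of_notMem_convexHull B.finite_toSet.sdiff (hB v hv)
  choose! t ht htR using fun v (hv : v ∈ B) =>
    exists_nonneg_add_smul_mem_sphere (hBc hv) (hn v hv)
  refine card_mul_pow_le_of_separated_on_sphere B (fun v => v + t v • n v) hr hrR htR ?_
  intro v hv w hw hvw
  exact (hsep hv hw hvw).trans (dist_le_dist_add_smul_add_smul (ht v hv) (ht w hw)
    (hnB v hv w ⟨hw, hvw.symm⟩) (hnB w hw v ⟨hv, hvw⟩))

theorem convex_position_in_ball_card_le_dim :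
    ∀ d : ℕ, 2 ≤ d → ∃ C : ℝ, 0 < C ∧ ∀ R : ℝ, 1 ≤ R →
      ∀ B : Finset (EuclideanSpace ℝ (Fin d)),
        ConvexPos (B : Set (EuclideanSpace ℝ (Fin d))) →
        (∀ a ∈ B, ∀ b ∈ B, a ≠ b → 1 ≤ dist a b) →
        (∃ c : EuclideanSpace ℝ (Fin d),
          (B : Set (EuclideanSpace ℝ (Fin d))) ⊆ Metric.closedBall c R) →
        (B.card : ℝ) ≤ C * R ^ (d - 1) := by
  intro d hd
  have hd₀ : (0 : ℝ) < d := by exact_mod_cast (by omega : 0 < d)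
  refine ⟨2 ^ d * d * 2 ^ (d - 1), by positivity, ?_⟩
  rintro R hR B hB hsep ⟨c, hc⟩
  have : Nonempty (Fin d) := ⟨⟨0, by omega⟩⟩
  have hpacking := card_mul_pow_le_of_convexPosition (r := 1 / 2) (by norm_num) (by linarith) hB
    (fun a ha b hb hab => by simpa using hsep a ha b hb hab) hc
  rw [finrank_euclideanSpace_fin] at hpacking
  have hshell : (R + 1 / 2) ^ d - (R - 1 / 2) ^ d ≤ d * (2 * R) ^ (d - 1) :=
    calc (R + 1 / 2) ^ d - (R - 1 / 2) ^ d
        ≤ |(R + 1 / 2) - (R - 1 / 2)| * d * max |R + 1 / 2| |R - 1 / 2| ^ (d - 1) :=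
          (le_abs_self _).trans (abs_pow_sub_pow_le _ _ _)
      _ ≤ d * (2 * R) ^ (d - 1) := by
          rw [show (R + 1 / 2) - (R - 1 / 2) = 1 by ring, abs_one, one_mul]
          gcongr
          exact max_le (by rw [abs_le]; constructor <;> linarith)
            (by rw [abs_le]; constructor <;> linarith)
  calc (#B : ℝ) = 2 ^ d * (#B * (1 / 2) ^ d) := by rw [mul_left_comm, ← mul_pow]; norm_num
    _ ≤ 2 ^ d * (d * (2 * R) ^ (d - 1)) := by gcongr 1; exact hpacking.trans hshell
    _ = 2 ^ d * d * 2 ^ (d - 1) * R ^ (d - 1) := by rw [mul_pow]; ring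
end

section
/- Let R > 0 and 0 < h ≤ R. Let V be a finite set of unit vectors in ℝ³ such that the spherical caps SurfCap(v) = {x ∈ ℝ³ : ‖x‖ = R and ⟨x, v⟩ ≥ R − h}, for v ∈ V, are pairwise disjoint, and such that the packing is maximal in the sense that for every unit vector w there exists v ∈ V with SurfCap(w) ∩ SurfCap(v) ≠ ∅. Then |V| ≥ R/(2h). (Equivalently: the caps in a maximal packing of caps of height h cover at least one quarter of the total surface area 4πR² of the sphere, each cap having surface area 2πRh.) -/
open scoped RealInnerProductSpace

def SurfCap (R h : ℝ) (v : EuclideanSpace ℝ (Fin 3)) :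
    Set (EuclideanSpace ℝ (Fin 3)) :=
  {x | ‖x‖ = R ∧ R - h ≤ ⟪x, v⟫}

/-! Let `c = (R - h) / R`, so that `SurfCap R h v` is the set of points of the sphere at angle at
most `arccos c` from `v`. By maximality every unit vector `w` has a cap of the packing meeting its
own, so by the triangle inequality for angles `w` is at angle at most `2 arccos c` from some
`v ∈ V`, i.e. `⟪w, v⟫ ≥ t := 2 c² - 1`. The cones of half-angle `arccos t` around the `v ∈ V` then
cover the unit ball; each of them meets it in volume `2π/3 · (1 - t)`, against `4π/3` for the ball,
so `#V · (1 - c²) ≥ 1`, and `1 - c² ≤ 2h / R`. The volume is computed for `t > 0`, which holds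
once `R > 4h`. For `2h < R ≤ 4h` it suffices that `#V ≥ 2`: the vector opposite to some `v ∈ V` is
not close to `v` itself. -/

open MeasureTheory Set Real InnerProductGeometry

section InnerProductSpace

variable {E F : Type*} [NormedAddCommGroup E] [InnerProductSpace ℝ E]
  [NormedAddCommGroup F] [InnerProductSpace ℝ F]

theorem two_mul_sq_sub_one_le_cos_angle {u w v : E} {c : ℝ} (hc : 0 ≤ c)
    (hw : c ≤ cos (angle u w)) (hv : c ≤ cos (angle u v)) :
    2 * c ^ 2 - 1 ≤ cos (angle w v) := by
  have hc1 : c ≤ 1 := hw.trans (cos_le_one _)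
  have angle_le {x : E} (hx : c ≤ cos (angle u x)) : angle u x ≤ arccos c := by
    simpa [arccos_cos (angle_nonneg u x) (angle_le_pi u x)] using arccos_le_arccos hx
  calc 2 * c ^ 2 - 1 = cos (2 * arccos c) := by
        rw [cos_two_mul, cos_arccos (by linarith) hc1]
    _ ≤ cos (angle w v) := by
        refine cos_le_cos_of_nonneg_of_le_pi (angle_nonneg w v) ?_ ?_
        · linarith [arccos_le_pi_div_two.mpr hc]
        · linarith [angle_le_angle_add_angle w u v, angle_comm w u, angle_le hw, angle_le hv]

/-- For a unit vector `v`, the points of the closed `R`-ball at angle at most `arccos t` from `v`. -/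
def sphericalSector (R t : ℝ) (v : E) : Set E :=
  {x | ‖x‖ ≤ R ∧ t * ‖x‖ ≤ ⟪x, v⟫}

theorem isClosed_sphericalSector (R t : ℝ) (v : E) : IsClosed (sphericalSector R t v) :=
  (isClosed_le continuous_norm continuous_const).inter
    (isClosed_le (continuous_const.mul continuous_norm) (continuous_id.inner continuous_const))

theorem preimage_sphericalSector (L : E ≃ₗᵢ[ℝ] F) (R t : ℝ) (v : E) :
    L ⁻¹' sphericalSector R t (L v) = sphericalSector R t v := by
  ext x
  simp [sphericalSector]

theorem closedBall_subset_union_sphericalSector {R t : ℝ} {V : Finset E}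
    (hV : ∀ w : E, ‖w‖ = 1 → ∃ v ∈ V, t ≤ ⟪w, v⟫) :
    Metric.closedBall (0 : E) R ⊆ {0} ∪ ⋃ v ∈ V, sphericalSector R t v := by
  intro x hx
  rcases eq_or_ne x 0 with rfl | hx0
  · exact Or.inl rfl
  obtain ⟨v, hvV, hwv⟩ := hV (‖x‖⁻¹ • x) (norm_smul_inv_norm hx0)
  have hxv : ⟪x, v⟫ = ‖x‖ * ⟪‖x‖⁻¹ • x, v⟫ := by
    rw [real_inner_smul_left, ← mul_assoc, mul_inv_cancel₀ (norm_ne_zero_iff.2 hx0), one_mul]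
  refine Or.inr (mem_biUnion hvV ⟨mem_closedBall_zero_iff.1 hx, ?_⟩)
  rw [hxv, mul_comm t]
  exact mul_le_mul_of_nonneg_left hwv (norm_nonneg x)

theorem one_lt_card_of_forall_exists_le_inner {t : ℝ} (ht : -1 < t) {V : Finset E}
    (hV1 : ∀ v ∈ V, ‖v‖ = 1) (hV : ∀ w : E, ‖w‖ = 1 → ∃ v ∈ V, t ≤ ⟪w, v⟫)
    (hne : V.Nonempty) : 1 < V.card := by
  obtain ⟨v₀, hv₀⟩ := hne
  obtain ⟨v, hv, hv₀v⟩ := hV (-v₀) (by rw [norm_neg, hV1 v₀ hv₀])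
  refine Finset.one_lt_card.2 ⟨v₀, hv₀, v, hv, fun h ↦ ?_⟩
  rw [← h, inner_neg_left, real_inner_self_eq_norm_sq, hV1 v₀ hv₀] at hv₀v
  linarith

end InnerProductSpace

theorem volume_setOf_sq_add_sq_le (s : ℝ) :
    volume {y : Fin 2 → ℝ | y 0 ^ 2 + y 1 ^ 2 ≤ s} = ENNReal.ofReal (π * s) := by
  rcases lt_or_ge s 0 with hs | hs
  · have : {y : Fin 2 → ℝ | y 0 ^ 2 + y 1 ^ 2 ≤ s} = ∅ :=
      eq_empty_of_forall_notMem fun y hy ↦ by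
        nlinarith [hy.out, sq_nonneg (y 0), sq_nonneg (y 1)]
    rw [this, measure_empty, ENNReal.ofReal_of_nonpos (by nlinarith [pi_pos])]
  · have hdisc : {y : Fin 2 → ℝ | y 0 ^ 2 + y 1 ^ 2 ≤ s} =
        WithLp.toLp 2 ⁻¹' Metric.closedBall 0 (√s) := by
      ext y
      simp [EuclideanSpace.norm_eq, Fin.sum_univ_two, Real.sqrt_le_sqrt_iff hs]
    rw [hdisc, (PiLp.volume_preserving_toLp (Fin 2)).measure_preimage
      measurableSet_closedBall.nullMeasurableSet, EuclideanSpace.volume_closedBall_fin_two,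
      ← ENNReal.ofReal_pow (sqrt_nonneg s), sq_sqrt hs, ← ENNReal.ofReal_mul hs, mul_comm]

theorem volume_solidOfRevolution {f : ℝ → ℝ} (hf : Measurable f) {I : Set ℝ}
    (hI : MeasurableSet I) :
    volume {x : EuclideanSpace ℝ (Fin 3) | x 0 ∈ I ∧ x 1 ^ 2 + x 2 ^ 2 ≤ f (x 0)} =
      ∫⁻ z in I, ENNReal.ofReal (π * f z) := by
  set S : Set (ℝ × (Fin 2 → ℝ)) := {p | p.1 ∈ I ∧ p.2 0 ^ 2 + p.2 1 ^ 2 ≤ f p.1}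
  have hS : MeasurableSet S :=
    (measurable_fst hI).inter (measurableSet_le (by fun_prop) (hf.comp measurable_fst))
  have hsplit := (volume_preserving_piFinSuccAbove (fun _ : Fin 3 ↦ ℝ) 0).comp
    (PiLp.volume_preserving_ofLp (Fin 3))
  have hpre : {x : EuclideanSpace ℝ (Fin 3) | x 0 ∈ I ∧ x 1 ^ 2 + x 2 ^ 2 ≤ f (x 0)} =
      (MeasurableEquiv.piFinSuccAbove (fun _ : Fin 3 ↦ ℝ) 0 ∘ WithLp.ofLp) ⁻¹' S :=
    rfl
  have hslice (z : ℝ) :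
      volume (Prod.mk z ⁻¹' S) = I.indicator (fun z ↦ ENNReal.ofReal (π * f z)) z := by
    by_cases hz : z ∈ I
    · simp [S, hz, volume_setOf_sq_add_sq_le]
    · simp [S, hz]
  rw [hpre, hsplit.measure_preimage hS.nullMeasurableSet, Measure.volume_eq_prod,
    Measure.prod_apply hS]
  simp_rw [hslice, lintegral_indicator hI]

theorem integral_min_sub_sq_mul_sq {R t : ℝ} (hR : 0 ≤ R) (ht0 : 0 < t) (ht1 : t ≤ 1) :
    ∫ z in (0)..R, π * min (R ^ 2 - z ^ 2) ((t⁻¹ ^ 2 - 1) * z ^ 2) =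
      2 * π / 3 * (1 - t) * R ^ 3 := by
  set g : ℝ → ℝ := fun z ↦ π * min (R ^ 2 - z ^ 2) ((t⁻¹ ^ 2 - 1) * z ^ 2)
  have hg : Continuous g := by fun_prop
  have htR : t * R ≤ R := mul_le_of_le_one_left hR ht1
  -- the cone `‖x‖ ≤ t⁻¹ * x 0` leaves the ball at height `x 0 = t * R`
  have hcone : ∫ z in (0)..(t * R), g z = ∫ z in (0)..(t * R), π * (t⁻¹ ^ 2 - 1) * z ^ 2 := by
    refine intervalIntegral.integral_congr fun z hz ↦ ?_
    rw [uIcc_of_le (by positivity)] at hz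
    have : (t⁻¹ * z) ^ 2 ≤ R ^ 2 :=
      pow_le_pow_left₀ (by have := hz.1; positivity) ((inv_mul_le_iff₀ ht0).mpr hz.2) 2
    simp only [g, min_eq_right (by linarith : (t⁻¹ ^ 2 - 1) * z ^ 2 ≤ R ^ 2 - z ^ 2)]
    ring
  have hcap : ∫ z in (t * R)..R, g z = ∫ z in (t * R)..R, (π * R ^ 2 - π * z ^ 2) := by
    refine intervalIntegral.integral_congr fun z hz ↦ ?_
    rw [uIcc_of_le htR] at hz
    have : R ^ 2 ≤ (t⁻¹ * z) ^ 2 := pow_le_pow_left₀ hR ((le_inv_mul_iff₀ ht0).mpr hz.1) 2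
    simp only [g, min_eq_left (by linarith : R ^ 2 - z ^ 2 ≤ (t⁻¹ ^ 2 - 1) * z ^ 2)]
    ring
  rw [← intervalIntegral.integral_add_adjacent_intervals (hg.intervalIntegrable 0 (t * R))
    (hg.intervalIntegrable _ R), hcone, hcap, intervalIntegral.integral_const_mul, integral_pow,
    intervalIntegral.integral_sub intervalIntegrable_const
      ((by fun_prop : Continuous fun z : ℝ ↦ π * z ^ 2).intervalIntegrable _ _),
    intervalIntegral.integral_const, intervalIntegral.integral_const_mul, integral_pow]
  field_simp
  ring

theorem sphericalSector_single_zero {R t : ℝ} (ht : 0 < t) :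
    sphericalSector R t (EuclideanSpace.single 0 1 : EuclideanSpace ℝ (Fin 3)) =
      {x | x 0 ∈ Icc 0 R ∧
        x 1 ^ 2 + x 2 ^ 2 ≤ min (R ^ 2 - x 0 ^ 2) ((t⁻¹ ^ 2 - 1) * x 0 ^ 2)} := by
  ext x
  have hnorm : ‖x‖ ^ 2 = x 0 ^ 2 + x 1 ^ 2 + x 2 ^ 2 := by
    simp [EuclideanSpace.real_norm_sq_eq, Fin.sum_univ_three]
  have hx0 : x 0 ≤ ‖x‖ := by
    simpa [EuclideanSpace.inner_single_right] using
      real_inner_le_norm x (EuclideanSpace.single 0 1)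
  simp only [sphericalSector, EuclideanSpace.inner_single_right, mem_ofPred_eq, mem_Icc,
    le_min_iff, ← le_inv_mul_iff₀ ht, one_mul, conj_trivial]
  constructor
  · rintro ⟨hR, hcone⟩
    have h0 : 0 ≤ x 0 :=
      (mul_nonneg_iff_of_pos_left (inv_pos.2 ht)).1 ((norm_nonneg x).trans hcone)
    have hR2 := pow_le_pow_left₀ (norm_nonneg x) hR 2
    have hcone2 := pow_le_pow_left₀ (norm_nonneg x) hcone 2
    exact ⟨⟨h0, hx0.trans hR⟩, by linarith, by linarith [mul_pow t⁻¹ (x 0) 2]⟩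
  · rintro ⟨⟨h0, h0R⟩, hR, hcone⟩
    exact ⟨(sq_le_sq₀ (norm_nonneg x) (h0.trans h0R)).1 (by linarith),
      (sq_le_sq₀ (norm_nonneg x) (by positivity)).1 (by linarith [mul_pow t⁻¹ (x 0) 2])⟩

theorem volume_sphericalSector {R t : ℝ} (hR : 0 ≤ R) (ht0 : 0 < t) (ht1 : t ≤ 1)
    {v : EuclideanSpace ℝ (Fin 3)} (hv : ‖v‖ = 1) :
    volume (sphericalSector R t v) = ENNReal.ofReal (2 * π / 3 * (1 - t) * R ^ 3) := by
  set e₀ : EuclideanSpace ℝ (Fin 3) := EuclideanSpace.single 0 1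
  set g : ℝ → ℝ := fun z ↦ π * min (R ^ 2 - z ^ 2) ((t⁻¹ ^ 2 - 1) * z ^ 2)
  have hg_nonneg : 0 ≤ᵐ[volume.restrict (Icc 0 R)] g := by
    refine (ae_restrict_iff' measurableSet_Icc).2 (Filter.Eventually.of_forall ?_)
    rintro z ⟨hz0, hzR⟩
    have : 1 ≤ t⁻¹ ^ 2 := one_le_pow₀ ((one_le_inv₀ ht0).2 ht1)
    exact mul_nonneg pi_pos.le (le_min (by nlinarith) (by nlinarith))
  rw [← preimage_sphericalSector (ℝ ∙ (v - e₀))ᗮ.reflection,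
    Submodule.reflection_sub (by simpa [e₀] using hv),
    (LinearIsometryEquiv.measurePreserving _).measure_preimage
      (isClosed_sphericalSector _ _ _).measurableSet.nullMeasurableSet,
    sphericalSector_single_zero ht0,
    volume_solidOfRevolution (f := fun z ↦ min (R ^ 2 - z ^ 2) ((t⁻¹ ^ 2 - 1) * z ^ 2))
      (by fun_prop) measurableSet_Icc,
    ← ofReal_integral_eq_lintegral_ofReal (by fun_prop : Continuous g).integrableOn_Icc hg_nonneg,
    integral_Icc_eq_integral_Ioc, ← intervalIntegral.integral_of_le hR,
    integral_min_sub_sq_mul_sq hR ht0 ht1]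

theorem two_le_card_mul_one_sub_of_forall_exists_le_inner {t : ℝ} (ht0 : 0 < t) (ht1 : t ≤ 1)
    {V : Finset (EuclideanSpace ℝ (Fin 3))} (hV1 : ∀ v ∈ V, ‖v‖ = 1)
    (hV : ∀ w : EuclideanSpace ℝ (Fin 3), ‖w‖ = 1 → ∃ v ∈ V, t ≤ ⟪w, v⟫) :
    2 ≤ V.card * (1 - t) := by
  have hvol := calc
    ENNReal.ofReal (π * 4 / 3)
        = volume (Metric.closedBall (0 : EuclideanSpace ℝ (Fin 3)) 1) := by simp
    _ ≤ volume ({0} ∪ ⋃ v ∈ V, sphericalSector 1 t v) :=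
        measure_mono (closedBall_subset_union_sphericalSector hV)
    _ ≤ volume ({0} : Set (EuclideanSpace ℝ (Fin 3))) +
          volume (⋃ v ∈ V, sphericalSector 1 t v) :=
        measure_union_le _ _
    _ ≤ ∑ v ∈ V, volume (sphericalSector 1 t v) := by
        rw [measure_singleton, zero_add]
        exact measure_biUnion_finset_le V _
    _ = ∑ v ∈ V, ENNReal.ofReal (2 * π / 3 * (1 - t)) := Finset.sum_congr rfl fun v hv ↦ by
        simpa using volume_sphericalSector zero_le_one ht0 ht1 (hV1 v hv)
    _ = ENNReal.ofReal (V.card * (2 * π / 3 * (1 - t))) := by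
        rw [Finset.sum_const, nsmul_eq_mul, ENNReal.ofReal_mul (Nat.cast_nonneg _),
          ENNReal.ofReal_natCast]
  have := (ENNReal.ofReal_le_ofReal_iff (by positivity)).1 hvol
  nlinarith [pi_pos]

theorem le_inner_of_surfCap_inter_nonempty {R h : ℝ} (hR : 0 < R) (hhR : h ≤ R)
    {w v : EuclideanSpace ℝ (Fin 3)} (hw : ‖w‖ = 1) (hv : ‖v‖ = 1)
    (hwv : (SurfCap R h w ∩ SurfCap R h v).Nonempty) :
    2 * ((R - h) / R) ^ 2 - 1 ≤ ⟪w, v⟫ := by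
  obtain ⟨x, ⟨hxR, hxw⟩, -, hxv⟩ := hwv
  have cos_angle_ge {y : EuclideanSpace ℝ (Fin 3)} (hy : ‖y‖ = 1) (hxy : R - h ≤ ⟪x, y⟫) :
      (R - h) / R ≤ cos (angle x y) := by
    rw [cos_angle, hxR, hy, mul_one]
    gcongr
  simpa [cos_angle, hw, hv] using
    two_mul_sq_sub_one_le_cos_angle (div_nonneg (by linarith) hR.le) (cos_angle_ge hw hxw)
      (cos_angle_ge hv hxv)

theorem maximal_cap_packing_card :
    ∀ R : ℝ, 0 < R → ∀ h : ℝ, 0 < h → h ≤ R →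
      ∀ V : Finset (EuclideanSpace ℝ (Fin 3)),
        (∀ v ∈ V, ‖v‖ = 1) →
        (∀ v ∈ V, ∀ w ∈ V, v ≠ w → SurfCap R h v ∩ SurfCap R h w = ∅) →
        (∀ w : EuclideanSpace ℝ (Fin 3), ‖w‖ = 1 →
          ∃ v ∈ V, (SurfCap R h w ∩ SurfCap R h v).Nonempty) →
        R / (2 * h) ≤ (V.card : ℝ) := by
  intro R hR h hh hhR V hV1 _ hmax
  set c := (R - h) / R
  have hcR : c * R = R - h := div_mul_cancel₀ _ hR.ne'
  have hdense (w : EuclideanSpace ℝ (Fin 3)) (hw : ‖w‖ = 1) :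
      ∃ v ∈ V, 2 * c ^ 2 - 1 ≤ ⟪w, v⟫ :=
    let ⟨v, hv, hwv⟩ := hmax w hw
    ⟨v, hv, le_inner_of_surfCap_inter_nonempty hR hhR hw (hV1 v hv) hwv⟩
  have hne : V.Nonempty :=
    let ⟨v, hv, _⟩ := hdense (EuclideanSpace.single 0 1) (by simp)
    ⟨v, hv⟩
  rw [div_le_iff₀ (by positivity)]
  rcases le_or_gt R (2 * h) with h2 | h2
  · have : (1 : ℝ) ≤ V.card := by exact_mod_cast hne.card_pos
    nlinarith
  rcases le_or_gt R (4 * h) with h4 | h4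
  · have hc : 0 < c := div_pos (by linarith) hR
    have : (2 : ℝ) ≤ V.card := by
      exact_mod_cast one_lt_card_of_forall_exists_le_inner (by nlinarith) hV1 hdense hne
    nlinarith
  · have hc : 3 / 4 ≤ c := by nlinarith
    have hc1 : c ≤ 1 := by nlinarith
    have hcard : 1 ≤ V.card * (1 - c ^ 2) := by
      linarith [two_le_card_mul_one_sub_of_forall_exists_le_inner (t := 2 * c ^ 2 - 1)
        (by nlinarith) (by nlinarith) hV1 hdense]
    have hcap : R * (1 - c ^ 2) ≤ 2 * h := by
      refine le_of_mul_le_mul_left ?_ hR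
      nlinarith [congrArg (· ^ 2) hcR]
    nlinarith [mul_le_mul_of_nonneg_left hcap (Nat.cast_nonneg V.card)]
end
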